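/- Let γ ∈ ℝ and let R assign a real reward R(h, s') to every history h of length t+1 (0 ≤ t < n) and next state s' ∈ S. Define g(τ) = ∑_{t=0}^{n-1} γ^t · R(prefix_t τ, τ (t+1)) and f₁(τ) = ∑_{t=0}^{n-1} γ^t · ∑_{s' ∈ S} T (τ t) (π (prefix_t τ)) s' · R(prefix_t τ, s'). Then ∑_{all trajectories τ} p(τ)·f₁(τ) = ∑_{all trajectories τ} p(τ)·g(τ). -/

import Mathlib

open Finset
open scoped Classical

noncomputable section

/-- The restriction of a trajectory `τ : Fin (n+1) → S` to its first `t+1` entries. -/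
def pre {S : Type*} {n : ℕ} (τ : Fin (n + 1) → S) (t : ℕ) (ht : t + 1 ≤ n + 1) :
    Fin (t + 1) → S :=
  fun i => τ (Fin.castLE ht i)

/-- The probability of the trajectory `τ` under policy `π`. -/
def prob {S A : Type*} {n : ℕ} (T : S → A → S → ℝ)
    (π : (t : ℕ) → (Fin (t + 1) → S) → A) (τ : Fin (n + 1) → S) : ℝ :=
  ∏ t : Fin n, T (τ t.castSucc) (π t (pre τ t (Nat.succ_le_succ t.isLt.le))) (τ t.succ)

/-! For each time `t`, the `t`-th terms of `f₁` and `g`, as well as the restriction `τ 0 = s₀`,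
are functions of the history up to time `t + 1`. Summing out the later states (each transition
kernel sums to `1`) reduces both expectations to trajectories of length `t + 2`, and there
splitting off the last state `s'` turns `R(prefix_t τ, s')` into its `T`-average, which is the
`t`-th term of `f₁`. -/

section Trajectory

variable {S A : Type*}

@[simp]
lemma pre_self {n : ℕ} (τ : Fin (n + 1) → S) (h : n + 1 ≤ n + 1) : pre τ n h = τ := rfl

lemma pre_snoc {n t : ℕ} (τ : Fin (n + 1) → S) (x : S) (h : t + 1 ≤ n + 2)
    (h' : t + 1 ≤ n + 1) : pre (Fin.snoc τ x : Fin (n + 2) → S) t h = pre τ t h' := by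
  funext i
  exact Fin.snoc_castSucc (α := fun _ => S) (i := Fin.castLE h' i) ..

lemma pre_apply_zero {n t : ℕ} (τ : Fin (n + 1) → S) (h : t + 1 ≤ n + 1) :
    pre τ t h 0 = τ 0 :=
  rfl

lemma sum_tuple_eq_sum_sum_snoc [Fintype S] {n : ℕ} (F : (Fin (n + 2) → S) → ℝ) :
    ∑ τ : Fin (n + 2) → S, F τ
      = ∑ τ : Fin (n + 1) → S, ∑ x : S, F (Fin.snoc τ x) := by
  rw [← Fintype.sum_equiv (Fin.snocEquiv fun _ => S) (fun p => F (Fin.snoc p.2 p.1)) F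
    fun _ => rfl, Fintype.sum_prod_type, sum_comm]

lemma prob_snoc (T : S → A → S → ℝ) (π : (t : ℕ) → (Fin (t + 1) → S) → A) {n : ℕ}
    (τ : Fin (n + 1) → S) (x : S) :
    prob T π (Fin.snoc τ x : Fin (n + 2) → S)
      = prob T π τ * T (τ (Fin.last n)) (π n τ) x := by
  unfold prob
  rw [Fin.prod_univ_castSucc]
  congr 1
  · refine prod_congr rfl fun i _ => ?_
    simp only [Fin.val_castSucc]
    rw [pre_snoc _ _ _ (Nat.succ_le_succ i.isLt.le), Fin.succ_castSucc, Fin.snoc_castSucc,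
      Fin.snoc_castSucc]
  · simp only [Fin.val_last]
    rw [pre_snoc _ _ _ le_rfl, pre_self, Fin.succ_last, Fin.snoc_castSucc, Fin.snoc_last]

variable [Fintype S] (T : S → A → S → ℝ) (π : (t : ℕ) → (Fin (t + 1) → S) → A)

lemma sum_prob_mul_next_state {t : ℕ} (ψ : (Fin (t + 1) → S) → S → ℝ) :
    ∑ σ : Fin (t + 2) → S, prob T π σ * ψ (pre σ t (by omega)) (σ (Fin.last (t + 1)))
      = ∑ σ : Fin (t + 1) → S,
          prob T π σ * ∑ s', T (σ (Fin.last t)) (π t σ) s' * ψ σ s' := by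
  rw [sum_tuple_eq_sum_sum_snoc]
  refine sum_congr rfl fun σ _ => ?_
  simp only [prob_snoc, pre_snoc _ _ _ le_rfl, Fin.snoc_last, mul_sum, pre_self, mul_assoc]

lemma sum_prob_mul_comp_pre (hT1 : ∀ s a, ∑ s', T s a s' = 1) {m : ℕ}
    (F : (Fin (m + 1) → S) → ℝ) {n : ℕ} (hmn : m ≤ n) :
    ∑ τ : Fin (n + 1) → S, prob T π τ * F (pre τ m (Nat.succ_le_succ hmn))
      = ∑ σ : Fin (m + 1) → S, prob T π σ * F σ := by
  induction n, hmn using Nat.le_induction with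
  | base => rfl
  | succ n hmn ih =>
    rw [sum_tuple_eq_sum_sum_snoc, ← ih]
    refine sum_congr rfl fun τ _ => ?_
    simp only [prob_snoc, pre_snoc _ _ _ (Nat.succ_le_succ hmn), mul_right_comm _ _ (F _),
      ← mul_sum, hT1, mul_one]

lemma sum_prob_mul_transition_average (hT1 : ∀ s a, ∑ s', T s a s' = 1) {n : ℕ} (t : Fin n)
    (ψ : (Fin (t + 1) → S) → S → ℝ) :
    ∑ τ : Fin (n + 1) → S, prob T π τ *
        ∑ s', T (τ t.castSucc) (π t (pre τ t (Nat.succ_le_succ t.isLt.le))) s' *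
          ψ (pre τ t (Nat.succ_le_succ t.isLt.le)) s'
      = ∑ τ : Fin (n + 1) → S,
          prob T π τ * ψ (pre τ t (Nat.succ_le_succ t.isLt.le)) (τ t.succ) :=
  (sum_prob_mul_comp_pre T π hT1 _ t.isLt.le).trans <| (sum_prob_mul_next_state T π ψ).symm.trans
    (sum_prob_mul_comp_pre T π hT1 (fun σ => ψ (pre σ t (by omega)) (σ (Fin.last (t + 1))))
      t.isLt).symm

end Trajectory

theorem f1_expectation_eq_g_expectation_general
    {S A : Type*} [Fintype S]
    (n : ℕ) (s₀ : S)
    (T : S → A → S → ℝ)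
    (hT1 : ∀ s a, ∑ s', T s a s' = 1)
    (π : (t : ℕ) → (Fin (t + 1) → S) → A)
    (γ : ℝ)
    (R : (t : ℕ) → (Fin (t + 1) → S) → S → ℝ) :
    ∑ τ ∈ univ.filter (fun τ : Fin (n + 1) → S => τ 0 = s₀),
      prob T π τ *
        (∑ t : Fin n, γ ^ (t : ℕ) *
          ∑ s' : S, T (τ t.castSucc) (π t (pre τ t (Nat.succ_le_succ t.isLt.le))) s' *
            R t (pre τ t (Nat.succ_le_succ t.isLt.le)) s')
      = ∑ τ ∈ univ.filter (fun τ : Fin (n + 1) → S => τ 0 = s₀),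
          prob T π τ *
            (∑ t : Fin n, γ ^ (t : ℕ) *
              R t (pre τ t (Nat.succ_le_succ t.isLt.le)) (τ t.succ)) := by
  simp only [mul_sum (univ : Finset (Fin n))]
  rw [sum_comm, sum_comm (s := univ.filter _)]
  refine sum_congr rfl fun t _ => ?_
  rw [sum_filter, sum_filter]
  refine (sum_congr rfl fun τ _ => ?_).trans <| (sum_prob_mul_transition_average T π hT1 t
    (fun h s' => if h 0 = s₀ then γ ^ (t : ℕ) * R t h s' else 0)).trans
    (sum_congr rfl fun τ _ => ?_) <;>
  by_cases hτ : τ 0 = s₀ <;> simp [hτ, pre_apply_zero, mul_sum, mul_left_comm]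

/-- The function `f₁`, which replaces each realized reward by the expected reward of the
action taken, has the same expectation as the lifetime reward `g`. -/
theorem f1_expectation_eq_g_expectation
    {S A : Type*} [Fintype S] [Nonempty S] [Fintype A] [Nonempty A]
    (n : ℕ) (hn : 1 ≤ n) (s₀ : S)
    (T : S → A → S → ℝ)
    (hT0 : ∀ s a s', 0 ≤ T s a s')
    (hT1 : ∀ s a, ∑ s', T s a s' = 1)
    (π : (t : ℕ) → (Fin (t + 1) → S) → A)
    (γ : ℝ)
    (R : (t : ℕ) → (Fin (t + 1) → S) → S → ℝ) :
    ∑ τ ∈ univ.filter (fun τ : Fin (n + 1) → S => τ 0 = s₀),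
      prob T π τ *
        (∑ t : Fin n, γ ^ (t : ℕ) *
          ∑ s' : S, T (τ t.castSucc) (π t (pre τ t (Nat.succ_le_succ t.isLt.le))) s' *
            R t (pre τ t (Nat.succ_le_succ t.isLt.le)) s')
      = ∑ τ ∈ univ.filter (fun τ : Fin (n + 1) → S => τ 0 = s₀),
          prob T π τ *
            (∑ t : Fin n, γ ^ (t : ℕ) *
              R t (pre τ t (Nat.succ_le_succ t.isLt.le)) (τ t.succ)) :=
  f1_expectation_eq_g_expectation_general n s₀ T hT1 π γ R
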